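/- Let G be a finite connected δ-hyperbolic simple graph and let C^{2δ}(G) = {v : e(v) ≤ rad(G) + 2δ}. Then for every two vertices x, y ∈ C^{2δ}(G), d(x,y) ≤ 8δ + 1. -/

import Mathlib

/-- The eccentricity of a vertex `u`: the maximum shortest-path distance from `u`. -/
noncomputable def graphEcc {V : Type*} [Fintype V] (G : SimpleGraph V) (u : V) : ℕ :=
  Finset.univ.sup (G.dist u)


/-- The radius: the minimum eccentricity. -/
noncomputable def graphRad {V : Type*} [Fintype V] [Nonempty V] (G : SimpleGraph V) : ℕ :=
  Finset.univ.inf' Finset.univ_nonempty (graphEcc G)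

/-- The diameter: the maximum eccentricity. -/
noncomputable def graphDiam {V : Type*} [Fintype V] (G : SimpleGraph V) : ℕ :=
  Finset.univ.sup (graphEcc G)


/-- `G` is `δ`-hyperbolic: for any four vertices, the two larger of the three distance sums
differ by at most `2δ` (four-point condition). -/
def IsHyperbolic {V : Type*} (G : SimpleGraph V) (δ : ℝ) : Prop :=
  ∀ u v x y : V,
    (G.dist u v : ℝ) + (G.dist x y : ℝ) ≤
      max ((G.dist u x : ℝ) + (G.dist v y : ℝ)) ((G.dist u y : ℝ) + (G.dist v x : ℝ)) + 2 * δ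

/-!
Take a vertex `m` halfway along a geodesic from `x` to `y` and a vertex `z` farthest from `m`,
so that `d(m, z) = e(m) ≥ rad(G)`. The four-point condition for `x, y, m, z` gives
`d(x, y) + d(m, z) ≤ max (d(x, m) + d(y, z)) (d(x, z) + d(y, m)) + 2δ`, and the right-hand side
is at most `(d(x, y) + 1) / 2 + rad(G) + 4δ` since `e(x), e(y) ≤ rad(G) + 2δ`.
Hence `d(x, y) ≤ (d(x, y) + 1) / 2 + 4δ`, i.e. `d(x, y) ≤ 8δ + 1`.
-/

namespace SimpleGraph

variable {V : Type*} {G : SimpleGraph V}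

lemma Walk.dist_start_getVert_le {u v : V} (p : G.Walk u v) (n : ℕ) :
    G.dist u (p.getVert n) ≤ n :=
  (dist_le (p.take n)).trans (by simp)

lemma Walk.dist_getVert_end_le {u v : V} (p : G.Walk u v) (n : ℕ) :
    G.dist (p.getVert n) v ≤ p.length - n :=
  (dist_le (p.drop n)).trans (by simp)

lemma Reachable.exists_midpoint {u v : V} (h : G.Reachable u v) :
    ∃ m, 2 * G.dist u m ≤ G.dist u v + 1 ∧ 2 * G.dist v m ≤ G.dist u v + 1 := by
  obtain ⟨p, hp⟩ := h.exists_walk_length_eq_dist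
  refine ⟨p.getVert ((G.dist u v + 1) / 2), ?_, ?_⟩
  · have := p.dist_start_getVert_le ((G.dist u v + 1) / 2)
    omega
  · have := p.dist_getVert_end_le ((G.dist u v + 1) / 2)
    rw [dist_comm]
    omega

end SimpleGraph

section Eccentricity

variable {V : Type*} [Fintype V] (G : SimpleGraph V)

lemma dist_le_graphEcc (u v : V) : G.dist u v ≤ graphEcc G u :=
  Finset.le_sup (Finset.mem_univ v)

lemma exists_dist_eq_graphEcc [Nonempty V] (u : V) : ∃ v, G.dist u v = graphEcc G u := by
  obtain ⟨v, -, hv⟩ := Finset.exists_mem_eq_sup Finset.univ Finset.univ_nonempty (G.dist u)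
  exact ⟨v, hv.symm⟩

lemma graphRad_le_graphEcc [Nonempty V] (u : V) : graphRad G ≤ graphEcc G u :=
  Finset.inf'_le _ (Finset.mem_univ u)

end Eccentricity

lemma IsHyperbolic.dist_add_graphEcc_le {V : Type*} [Fintype V] [Nonempty V]
    {G : SimpleGraph V} {δ : ℝ} (hyp : IsHyperbolic G δ) (x y m : V) :
    (G.dist x y : ℝ) + graphEcc G m ≤
      max ((G.dist x m : ℝ) + graphEcc G y) ((graphEcc G x : ℝ) + G.dist y m) + 2 * δ := by
  obtain ⟨z, hz⟩ := exists_dist_eq_graphEcc G m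
  have hyz : (G.dist y z : ℝ) ≤ graphEcc G y := by exact_mod_cast dist_le_graphEcc G y z
  have hxz : (G.dist x z : ℝ) ≤ graphEcc G x := by exact_mod_cast dist_le_graphEcc G x z
  calc (G.dist x y : ℝ) + graphEcc G m = G.dist x y + G.dist m z := by rw [hz]
    _ ≤ max ((G.dist x m : ℝ) + G.dist y z) ((G.dist x z : ℝ) + G.dist y m) + 2 * δ := hyp x y m z
    _ ≤ _ := by gcongr

theorem hyperbolic_near_center_diam_general {V : Type*} [Fintype V] [Nonempty V] (G : SimpleGraph V)
    (hG : G.Connected) (δ : ℝ) (hyp : IsHyperbolic G δ)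
    (x y : V)
    (hx : (graphEcc G x : ℝ) ≤ (graphRad G : ℝ) + 2 * δ)
    (hy : (graphEcc G y : ℝ) ≤ (graphRad G : ℝ) + 2 * δ) :
    (G.dist x y : ℝ) ≤ 8 * δ + 1 := by
  obtain ⟨m, hxm, hym⟩ := (hG.preconnected x y).exists_midpoint
  have hxm' : 2 * (G.dist x m : ℝ) ≤ G.dist x y + 1 := by exact_mod_cast hxm
  have hym' : 2 * (G.dist y m : ℝ) ≤ G.dist x y + 1 := by exact_mod_cast hym
  have hm : (graphRad G : ℝ) ≤ graphEcc G m := by exact_mod_cast graphRad_le_graphEcc G m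
  have hmax : max ((G.dist x m : ℝ) + graphEcc G y) ((graphEcc G x : ℝ) + G.dist y m) ≤
      (G.dist x y + 1) / 2 + graphRad G + 2 * δ :=
    max_le (by linarith) (by linarith)
  linarith [hyp.dist_add_graphEcc_le x y m]

theorem hyperbolic_near_center_diam {V : Type*} [Fintype V] [Nonempty V] (G : SimpleGraph V)
    (hG : G.Connected) (δ : ℝ) (hδ : 0 ≤ δ) (hyp : IsHyperbolic G δ)
    (x y : V)
    (hx : (graphEcc G x : ℝ) ≤ (graphRad G : ℝ) + 2 * δ)
    (hy : (graphEcc G y : ℝ) ≤ (graphRad G : ℝ) + 2 * δ) :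
    (G.dist x y : ℝ) ≤ 8 * δ + 1 :=
  hyperbolic_near_center_diam_general G hG δ hyp x y hx hy
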